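/- arXiv:1812.01021 — 3 statements merged into one kernel-verified Lean document; each statement's English description precedes it below -/
import Mathlib

section
/- Let A : U → U be a self-adjoint endomorphism of an ℓ-dimensional real inner product space U, and let k ∈ {1,...,ℓ-1}. If for every k-dimensional subspace W ⊆ U the trace of the composition (orthogonal projection onto W) ∘ (A restricted to W) is at most k·λ, then there exists an (ℓ-k+1)-dimensional subspace V ⊆ U such that ⟨Av, v⟩ ≤ λ for every unit vector v ∈ V. -/
/-!
Diagonalize `A` in an orthonormal eigenbasis `(bᵢ)` with eigenvalues `μᵢ`. On the span of any
set of eigenvectors, the trace of the compression of `A` is the sum of the corresponding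
eigenvalues. Hence fewer than `k` eigenvalues exceed `λ`: otherwise `k` of them would span a
`k`-dimensional subspace with trace `> kλ`. So at least `ℓ - k + 1` eigenvalues are `≤ λ`, and
on the span `V` of their eigenvectors `⟪A v, v⟫ = ∑ μᵢ ⟪bᵢ, v⟫² ≤ λ ‖v‖²`.
-/

open FiniteDimensional Module
open scoped RealInnerProductSpace

open Finset Submodule

section

variable {E : Type*} [NormedAddCommGroup E] [InnerProductSpace ℝ E]

noncomputable def LinearMap.compressionTrace (f : E →ₗ[ℝ] E) (W : Submodule ℝ E)
    [W.HasOrthogonalProjection] : ℝ :=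
  LinearMap.trace ℝ W ((W.orthogonalProjectionOnto).toLinearMap.comp (f.comp W.subtype))

lemma LinearMap.compressionTrace_eq_sum_inner (f : E →ₗ[ℝ] E) (W : Submodule ℝ E)
    [W.HasOrthogonalProjection] {ι : Type*} [Fintype ι] [DecidableEq ι]
    (b : OrthonormalBasis ι ℝ W) :
    f.compressionTrace W = ∑ i, ⟪(b i : E), f (b i)⟫ := by
  rw [compressionTrace, LinearMap.trace_eq_matrix_trace ℝ b.toBasis, Matrix.trace]
  refine Finset.sum_congr rfl fun i _ => ?_
  rw [Matrix.diag_apply, LinearMap.toMatrix_apply, b.coe_toBasis_repr_apply, b.repr_apply_apply]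
  simp only [LinearMap.coe_comp, ContinuousLinearMap.coe_coe, Function.comp_apply,
    Submodule.coe_subtype, b.coe_toBasis]
  rw [Submodule.inner_orthogonalProjectionOnto_eq_of_mem_left]

namespace OrthonormalBasis

variable {ι : Type*} [Fintype ι] (b : OrthonormalBasis ι ℝ E)

lemma finrank_span_image (s : Finset ι) : finrank ℝ (span ℝ (b '' s)) = #s := by
  classical
  rw [← Finset.coe_image, finrank_eq_card_basis (OrthonormalBasis.span b.orthonormal s).toBasis,
    Fintype.card_coe]

lemma inner_eq_zero_of_mem_span_image {t : Finset ι} {i : ι} (hi : i ∉ t) {v : E}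
    (hv : v ∈ span ℝ (b '' t)) : ⟪b i, v⟫ = 0 := by
  suffices span ℝ (b '' t) ≤ (ℝ ∙ b i)ᗮ from
    mem_orthogonal_singleton_iff_inner_right.mp (this hv)
  rw [span_le]
  rintro _ ⟨j, hj, rfl⟩
  exact mem_orthogonal_singleton_iff_inner_right.mpr (b.orthonormal.2 fun h => hi (h ▸ hj))

variable {A : E →ₗ[ℝ] E} {μ : ι → ℝ} (hAb : ∀ i, A (b i) = μ i • b i)
include hAb

lemma compressionTrace_span_image [FiniteDimensional ℝ E] (s : Finset ι) :
    A.compressionTrace (span ℝ (b '' s)) = ∑ i ∈ s, μ i := by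
  classical
  rw [← Finset.coe_image,
    A.compressionTrace_eq_sum_inner _ (OrthonormalBasis.span b.orthonormal s),
    ← Finset.sum_coe_sort s]
  refine Finset.sum_congr rfl fun i _ => ?_
  rw [OrthonormalBasis.span_apply, hAb, real_inner_smul_right, real_inner_self_eq_norm_sq,
    b.orthonormal.1, one_pow, mul_one]

lemma card_lt_of_forall_compressionTrace_le [FiniteDimensional ℝ E] {k : ℕ} (hk : 0 < k)
    {c : ℝ} (htr : ∀ W : Submodule ℝ E, finrank ℝ W = k → A.compressionTrace W ≤ k * c) :
    #{i | c < μ i} < k := by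
  by_contra! hcard
  obtain ⟨s, hs, rfl⟩ := Finset.exists_subset_card_eq hcard
  have hle := htr _ (b.finrank_span_image s)
  rw [b.compressionTrace_span_image hAb] at hle
  have hlt : ∑ _i ∈ s, c < ∑ i ∈ s, μ i :=
    Finset.sum_lt_sum_of_nonempty (Finset.card_pos.mp hk) fun i hi =>
      (Finset.mem_filter.mp (hs hi)).2
  rw [Finset.sum_const, nsmul_eq_mul] at hlt
  linarith

lemma inner_map_self_eq_sum (hA : A.IsSymmetric) (v : E) :
    ⟪A v, v⟫ = ∑ i, μ i * ⟪b i, v⟫ ^ 2 := by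
  rw [← b.sum_inner_mul_inner]
  refine Finset.sum_congr rfl fun i _ => ?_
  rw [hA, hAb, real_inner_smul_right, real_inner_comm v]
  ring

lemma inner_map_self_le_of_mem_span_image (hA : A.IsSymmetric) {t : Finset ι} {c : ℝ}
    (ht : ∀ i ∈ t, μ i ≤ c) {v : E} (hv : v ∈ span ℝ (b '' t)) :
    ⟪A v, v⟫ ≤ c * ‖v‖ ^ 2 := by
  rw [b.inner_map_self_eq_sum hAb hA, ← b.sum_sq_inner_right, Finset.mul_sum]
  refine Finset.sum_le_sum fun i _ => ?_
  by_cases hi : i ∈ t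
  · exact mul_le_mul_of_nonneg_right (ht i hi) (sq_nonneg _)
  · simp [b.inner_eq_zero_of_mem_span_image hi hv]

end OrthonormalBasis

end

/-- If `A` is a self-adjoint endomorphism of an `ℓ`-dimensional real
inner product space `U`, `1 ≤ k ≤ ℓ - 1`, and for every `k`-dimensional subspace `W`
the trace of `P_W ∘ A|_W` is at most `k·λ`, then there is an `(ℓ - k + 1)`-dimensional
subspace `V` with `⟪A v, v⟫ ≤ λ` for every unit vector `v ∈ V`. -/
theorem stmt0 {U : Type*} [NormedAddCommGroup U] [InnerProductSpace ℝ U]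
    [FiniteDimensional ℝ U] (ℓ k : ℕ) (hU : Module.finrank ℝ U = ℓ)
    (hk : 1 ≤ k) (hkℓ : k ≤ ℓ - 1)
    (A : U →ₗ[ℝ] U) (hA : A.IsSymmetric) (lam : ℝ)
    (htr : ∀ W : Submodule ℝ U, Module.finrank ℝ W = k →
      LinearMap.trace ℝ W
        (((W.orthogonalProjectionOnto).toLinearMap).comp (A.comp W.subtype)) ≤ k * lam) :
    ∃ V : Submodule ℝ U, Module.finrank ℝ V = ℓ - k + 1 ∧
      ∀ v ∈ V, ‖v‖ = 1 → ⟪A v, v⟫ ≤ lam := by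
  set b := hA.eigenvectorBasis hU
  set μ := hA.eigenvalues hU
  have hAb : ∀ i, A (b i) = μ i • b i := hA.apply_eigenvectorBasis hU
  have hlarge : #{i | lam < μ i} < k :=
    b.card_lt_of_forall_compressionTrace_le hAb (by omega) htr
  have hsmall : ℓ - k + 1 ≤ #{i | μ i ≤ lam} := by
    have := Finset.card_filter_add_card_filter_not (s := Finset.univ) (fun i => μ i ≤ lam)
    simp only [not_le, Finset.card_univ, Fintype.card_fin] at this
    omega
  obtain ⟨t, hts, htcard⟩ := Finset.exists_subset_card_eq hsmall
  refine ⟨span ℝ (b '' t), by rw [b.finrank_span_image, htcard], fun v hv hv1 => ?_⟩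
  have hμt : ∀ i ∈ t, μ i ≤ lam := fun i hi => (Finset.mem_filter.mp (hts hi)).2
  simpa [hv1] using b.inner_map_self_le_of_mem_span_image hAb hA hμt hv
end

section
/- Riccati comparison: if u : (a, b) → ℝ is differentiable with u′ ≤ −1 − u² and u(t₀) ≤ cot(s₀) for some s₀ ∈ (0, π) and t₀ ∈ (a, b), then u(t) ≤ cot(s₀ + (t − t₀)) for all t ∈ [t₀, b) with s₀ + (t − t₀) < π; in particular b − t₀ ≤ π − s₀. -/
open Real Set

lemma cot_eq_tan_pi_div_two_sub (x : ℝ) : Real.cot x = Real.tan (π / 2 - x) := by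
  rw [Real.tan_pi_div_two_sub, Real.cot_eq_cos_div_sin, Real.tan_eq_sin_div_cos, inv_div]

/-- Scalar Riccati comparison: if `u` is differentiable on `(a,b)`
with `u′ ≤ −1 − u²`, `t₀ ∈ (a,b)`, `s₀ ∈ (0,π)` and `u t₀ ≤ cot s₀`, then
`u t ≤ cot (s₀ + (t − t₀))` for all `t ∈ [t₀, b)` with `s₀ + (t − t₀) < π`;
in particular `b − t₀ ≤ π − s₀`. -/
theorem stmt14 (a b t₀ s₀ : ℝ) (u u' : ℝ → ℝ)
    (hder : ∀ t ∈ Ioo a b, HasDerivAt u (u' t) t)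
    (hric : ∀ t ∈ Ioo a b, u' t ≤ -1 - (u t) ^ 2)
    (ht₀ : t₀ ∈ Ioo a b) (hs₀ : s₀ ∈ Ioo 0 π)
    (hinit : u t₀ ≤ Real.cot s₀) :
    (∀ t, t₀ ≤ t → t < b → s₀ + (t - t₀) < π → u t ≤ Real.cot (s₀ + (t - t₀))) ∧
      b - t₀ ≤ π - s₀ := by
  -- the auxiliary function g x = arccot (u x) - (x - t₀) is monotone on [t₀, b)
  set g : ℝ → ℝ := fun x => π / 2 - Real.arctan (u x) - (x - t₀) with hg
  have hsub : Ico t₀ b ⊆ Ioo a b := fun x hx => ⟨lt_of_lt_of_le ht₀.1 hx.1, hx.2⟩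
  have hgd : ∀ x ∈ Ioo a b,
      HasDerivAt g (-(1 / (1 + (u x) ^ 2) * u' x) - 1) x := by
    intro x hx
    have h1 : HasDerivAt (fun y => Real.arctan (u y)) (1 / (1 + (u x) ^ 2) * u' x) x :=
      (Real.hasDerivAt_arctan (u x)).comp x (hder x hx)
    have h2 := ((hasDerivAt_const x (π / 2)).sub h1).sub ((hasDerivAt_id x).sub_const t₀)
    have e : (0 - 1 / (1 + u x ^ 2) * u' x - 1) = -(1 / (1 + (u x) ^ 2) * u' x) - 1 := by ring
    rw [e] at h2
    have hge : g = ((fun x => π / 2) - fun y => Real.arctan (u y)) - fun x => id x - t₀ := by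
      funext y; simp [hg]
    rw [hge]; exact h2
  have hpos : ∀ x : ℝ, (0:ℝ) < 1 + (u x) ^ 2 := fun x => by positivity
  have hderiv_nonneg : ∀ x ∈ Ioo a b, 0 ≤ -(1 / (1 + (u x) ^ 2) * u' x) - 1 := by
    intro x hx
    have h := hric x hx
    have he : -(1 / (1 + (u x) ^ 2) * u' x) = (-(u' x)) / (1 + (u x) ^ 2) := by ring
    rw [sub_nonneg, he, le_div_iff₀ (hpos x), one_mul]
    linarith
  have hmono : MonotoneOn g (Ico t₀ b) := by
    apply monotoneOn_of_deriv_nonneg (convex_Ico t₀ b)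
    · exact fun x hx => ((hgd x (hsub hx)).continuousAt).continuousWithinAt
    · intro x hx
      rw [interior_Ico] at hx
      exact ((hgd x (hsub ⟨le_of_lt hx.1, hx.2⟩)).differentiableAt).differentiableWithinAt
    · intro x hx
      rw [interior_Ico] at hx
      have hx' : x ∈ Ioo a b := hsub ⟨le_of_lt hx.1, hx.2⟩
      rw [(hgd x hx').deriv]
      exact hderiv_nonneg x hx'
  -- initial bound: arccot (u t₀) ≥ s₀
  have hinit' : s₀ ≤ π / 2 - Real.arctan (u t₀) := by
    have h1 : Real.arctan (u t₀) ≤ Real.arctan (Real.cot s₀) :=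
      Real.arctan_strictMono.monotone hinit
    have h2 : Real.arctan (Real.cot s₀) = π / 2 - s₀ := by
      rw [cot_eq_tan_pi_div_two_sub, Real.arctan_tan (by linarith [hs₀.2]) (by linarith [hs₀.1])]
    linarith
  -- main estimate: arccot (u t) ≥ s₀ + (t - t₀)
  have hkey : ∀ t, t₀ ≤ t → t < b → s₀ + (t - t₀) ≤ π / 2 - Real.arctan (u t) := by
    intro t ht1 ht2
    have hb : t₀ < b := lt_of_le_of_lt ht1 ht2
    have := hmono ⟨le_refl t₀, hb⟩ ⟨ht1, ht2⟩ ht1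
    simp only [hg, sub_self, sub_zero] at this
    linarith
  constructor
  · intro t ht1 ht2 htπ
    have hk := hkey t ht1 ht2
    have harc : Real.arctan (u t) ≤ π / 2 - (s₀ + (t - t₀)) := by linarith
    have hθ1 : -(π / 2) < π / 2 - (s₀ + (t - t₀)) := by linarith
    have hθ2 : π / 2 - (s₀ + (t - t₀)) < π / 2 := by
      have : 0 < s₀ + (t - t₀) := by
        have := hs₀.1; nlinarith
      linarith
    calc u t = Real.tan (Real.arctan (u t)) := (Real.tan_arctan _).symm
      _ ≤ Real.tan (π / 2 - (s₀ + (t - t₀))) := by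
          rcases eq_or_lt_of_le harc with h | h
          · rw [h]
          · exact le_of_lt (Real.tan_lt_tan_of_lt_of_lt_pi_div_two
              (Real.neg_pi_div_two_lt_arctan _) hθ2 h)
      _ = Real.cot (s₀ + (t - t₀)) := (cot_eq_tan_pi_div_two_sub _).symm
  · apply le_of_forall_lt
    intro c hc
    rcases lt_or_ge c 0 with h | h
    · have := hs₀.2; linarith
    · have hk := hkey (c + t₀) (by linarith) (by linarith)
      have := Real.neg_pi_div_two_lt_arctan (u (c + t₀))
      have hπ := Real.pi_pos
      linarith
end

section
/- Let s : (0, T) → ℝ be differentiable and satisfy s′ + s² + 1 ≤ 0 and lim inf_{t→0⁺} (cot(t) − s(t)) ≥ 0. Then s(t) ≤ cot(t) for all t ∈ (0, T), and consequently T ≤ π. -/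
open Real Set Filter

/-- If `s` is differentiable on `(0,T)` with `s′ + s² + 1 ≤ 0` and
`liminf_{t→0⁺} (cot t − s t) ≥ 0` (expressed eventually), then `s t ≤ cot t` on `(0,T)`
and consequently `T ≤ π`. -/
theorem stmt15 (T : ℝ) (hT : 0 < T) (s s' : ℝ → ℝ)
    (hder : ∀ t ∈ Ioo 0 T, HasDerivAt s (s' t) t)
    (hric : ∀ t ∈ Ioo 0 T, s' t + (s t) ^ 2 + 1 ≤ 0)
    (hinit : ∀ ε > (0 : ℝ), ∀ᶠ t in nhdsWithin 0 (Ioi 0), -ε ≤ Real.cot t - s t) :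
    (∀ t ∈ Ioo 0 T, s t ≤ Real.cot t) ∧ T ≤ π := by
  have hderf : ∀ t ∈ Ioo 0 T,
      HasDerivAt (fun t => Real.arctan (s t) + t) (1 / (1 + (s t) ^ 2) * s' t + 1) t := by
    intro t ht
    exact ((Real.hasDerivAt_arctan (s t)).comp t (hder t ht)).add (hasDerivAt_id t)
  have hderneg : ∀ t ∈ Ioo 0 T, 1 / (1 + (s t) ^ 2) * s' t + 1 ≤ 0 := by
    intro t ht
    have h1 := hric t ht
    have hpos : (0:ℝ) < 1 + (s t) ^ 2 := by positivity
    have h2 : s' t ≤ -(1 + (s t) ^ 2) := by linarith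
    have h3 : 1 / (1 + (s t) ^ 2) * s' t ≤ 1 / (1 + (s t) ^ 2) * (-(1 + (s t) ^ 2)) := by
      apply mul_le_mul_of_nonneg_left h2
      positivity
    have h4 : 1 / (1 + (s t) ^ 2) * (-(1 + (s t) ^ 2)) = -1 := by
      field_simp
    linarith
  have hanti : AntitoneOn (fun t => Real.arctan (s t) + t) (Ioo 0 T) := by
    apply antitoneOn_of_deriv_nonpos (convex_Ioo 0 T)
    · intro t ht
      exact (hderf t ht).continuousAt.continuousWithinAt
    · intro t ht
      rw [interior_Ioo] at ht
      exact (hderf t ht).differentiableAt.differentiableWithinAt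
    · intro t ht
      rw [interior_Ioo] at ht
      rw [(hderf t ht).deriv]
      exact hderneg t ht
  -- arctan (s t) + t ≤ π/2 for all t ∈ (0, T)
  have hfle : ∀ t ∈ Ioo 0 T, Real.arctan (s t) + t ≤ π / 2 := by
    intro t ht
    apply le_of_forall_pos_le_add
    intro ε hε
    obtain ⟨u, hu0, hut, huε⟩ : ∃ u : ℝ, 0 < u ∧ u ≤ t ∧ u ≤ ε :=
      ⟨min ε (t / 2), lt_min hε (by linarith [ht.1]),
        le_trans (min_le_right _ _) (by linarith [ht.1]), min_le_left _ _⟩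
    have huI : u ∈ Ioo 0 T := ⟨hu0, lt_of_le_of_lt hut ht.2⟩
    have h1 : Real.arctan (s t) + t ≤ Real.arctan (s u) + u := hanti huI ht hut
    have h2 := Real.arctan_lt_pi_div_two (s u)
    linarith
  have hlt : ∀ t ∈ Ioo 0 T, t < π := by
    intro t ht
    have h1 := hfle t ht
    have h2 := Real.neg_pi_div_two_lt_arctan (s t)
    linarith
  constructor
  · intro t ht
    have ht1 : Real.arctan (s t) ≤ π / 2 - t := by linarith [hfle t ht]
    have htpi := hlt t ht
    have hmem1 : Real.arctan (s t) ∈ Ioo (-(π/2)) (π/2) :=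
      ⟨Real.neg_pi_div_two_lt_arctan _, Real.arctan_lt_pi_div_two _⟩
    have hmem2 : π / 2 - t ∈ Ioo (-(π/2)) (π/2) := by
      constructor <;> [linarith; linarith [ht.1]]
    have := Real.strictMonoOn_tan.monotoneOn hmem1 hmem2 ht1
    rw [Real.tan_arctan, Real.tan_pi_div_two_sub] at this
    rwa [Real.cot_eq_cos_div_sin, ← inv_div, ← Real.tan_eq_sin_div_cos]
  · by_contra h
    push_neg at h
    exact absurd (hlt π ⟨Real.pi_pos, h⟩) (lt_irrefl π)
end
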